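/- Let Σ be an n×n symmetric positive definite real matrix whose largest eigenvalue is λ. Then for every r ≥ 0, the Gaussian measure of the complement of the closed ball of radius r satisfies ∫_{{f ∈ ℝⁿ : ‖f‖ > r}} (2π)^{−n/2} (det Σ)^{−1/2} exp(−fᵀ Σ^{−1} f / 2) df ≤ F(n, r²/λ). -/

import Mathlib

open Matrix MeasureTheory

/-- The Euclidean norm of a vector in `ℝⁿ`. -/
noncomputable def euclNorm {n : ℕ} (v : Fin n → ℝ) : ℝ :=
  Real.sqrt (∑ i, v i ^ 2)

/-- The upper tail `F(a, b)` of the chi-square distribution with `a` degrees of freedom. -/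
noncomputable def chiSqUpperTail (a : ℕ) (b : ℝ) : ℝ :=
  (∫ t in Set.Ioi (0 : ℝ), t ^ ((a : ℝ) / 2 - 1) * Real.exp (-t))⁻¹ *
    ∫ t in Set.Ioi (b / 2), t ^ ((a : ℝ) / 2 - 1) * Real.exp (-t)

section
open Real Set Filter

lemma aux_integrable_gauss (n : ℕ) :
    Integrable (fun g : Fin n → ℝ => Real.exp (-(∑ i, g i ^ 2) / 2)) := by
  have h1 : ∀ i : Fin n, Integrable (fun x : ℝ => Real.exp (-(1/2 : ℝ) * x ^ 2)) := fun _ =>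
    integrable_exp_neg_mul_sq (by norm_num)
  have h2 := Integrable.fintype_prod (f := fun _ : Fin n => fun x : ℝ =>
    Real.exp (-(1/2:ℝ) * x ^ 2)) h1
  refine h2.congr (Filter.Eventually.of_forall fun g => ?_)
  simp only [← Real.exp_sum]
  congr 1
  rw [← Finset.sum_neg_distrib, Finset.sum_div]
  exact Finset.sum_congr rfl fun i _ => by ring

lemma aux_subst (n : ℕ) (hn : 0 < n) (s : ℝ) (hs : 0 ≤ s) :
    ∫ y in Ioi s, y ^ (n - 1) * Real.exp (-(y ^ 2) / 2)
      = (2 : ℝ) ^ ((n : ℝ) / 2 - 1) *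
        ∫ t in Ioi (s ^ 2 / 2), t ^ ((n : ℝ) / 2 - 1) * Real.exp (-t) := by
  set g : ℝ → ℝ := fun t => t ^ ((n : ℝ) / 2 - 1) * Real.exp (-t) with hg
  have hpt : ∀ y : ℝ, 0 < y →
      g (y ^ 2 / 2) * y = (2:ℝ) ^ (1 - (n : ℝ) / 2) *
        (y ^ (n - 1) * Real.exp (-(y ^ 2) / 2)) := by
    intro y hy0
    have h1 : ((y:ℝ) ^ 2 / 2) ^ ((n:ℝ)/2 - 1)
        = y ^ ((n:ℝ) - 2) * 2 ^ (1 - (n:ℝ)/2) := by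
      rw [Real.div_rpow (by positivity) (by norm_num)]
      rw [← Real.rpow_natCast y 2, ← Real.rpow_mul hy0.le]
      rw [div_eq_mul_inv, ← Real.rpow_neg (by norm_num : (0:ℝ) ≤ 2)]
      congr 1
      · congr 1; push_cast; ring
      · congr 1; ring
    have h2 : y ^ ((n:ℝ) - 2) * y = y ^ (n - 1 : ℕ) := by
      nth_rewrite 2 [← Real.rpow_one y]
      rw [← Real.rpow_add hy0, ← Real.rpow_natCast y (n-1)]
      congr 1
      push_cast [Nat.cast_sub hn]
      ring
    rw [hg]
    simp only []
    rw [h1, neg_div]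
    calc y ^ ((n:ℝ) - 2) * 2 ^ (1 - (n:ℝ)/2) * Real.exp (-(y ^ 2 / 2)) * y
        = 2 ^ (1 - (n:ℝ)/2) * ((y ^ ((n:ℝ) - 2) * y) * Real.exp (-(y ^ 2 / 2))) := by ring
      _ = _ := by rw [h2]
  have hgcont : ContinuousOn g (Ioi (0:ℝ)) := by
    apply ContinuousOn.mul
    · exact fun t ht => (Real.continuousAt_rpow_const t _ (Or.inl (ne_of_gt ht))).continuousWithinAt
    · exact (Real.continuous_exp.comp continuous_neg).continuousOn
  have himg1 : (fun y : ℝ => y ^ 2 / 2) '' Ioi s ⊆ Ioi 0 := by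
    rintro _ ⟨y, hy, rfl⟩
    have : 0 < y := lt_of_le_of_lt hs hy
    exact mem_Ioi.mpr (by positivity)
  have himg2 : (fun y : ℝ => y ^ 2 / 2) '' Ici s ⊆ Ici 0 := by
    rintro _ ⟨y, hy, rfl⟩
    exact mem_Ici.mpr (by positivity)
  have hgint : IntegrableOn g (Ici (0:ℝ)) := by
    rw [integrableOn_Ici_iff_integrableOn_Ioi]
    exact (Real.GammaIntegral_convergent (by positivity : (0:ℝ) < (n:ℝ)/2)).congr_fun
      (fun t ht => by rw [hg]; ring) measurableSet_Ioi
  have hg2 : IntegrableOn (fun y : ℝ => (g ∘ fun y : ℝ => y ^ 2 / 2) y * y) (Ici s) := by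
    rw [integrableOn_Ici_iff_integrableOn_Ioi]
    have base0 : IntegrableOn (fun y : ℝ => y ^ (n - 1 : ℕ) * Real.exp (-(y ^ 2) / 2))
        (Ioi s) := by
      refine ((integrableOn_rpow_mul_exp_neg_mul_sq (b := 1/2) (by norm_num)
        (s := ((n - 1 : ℕ) : ℝ)) (lt_of_lt_of_le (by norm_num) (Nat.cast_nonneg _))).mono_set
        (Ioi_subset_Ioi hs)).congr_fun (fun y hy => ?_) measurableSet_Ioi
      beta_reduce
      rw [Real.rpow_natCast]
      congr 1
      ring
    have base2 : IntegrableOn (fun y : ℝ => (2:ℝ) ^ (1 - (n : ℝ) / 2) *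
        (y ^ (n - 1 : ℕ) * Real.exp (-(y ^ 2) / 2))) (Ioi s) := base0.const_mul _
    exact base2.congr_fun
      (fun y hy => (hpt y (lt_of_le_of_lt hs hy)).symm) measurableSet_Ioi
  have key := integral_comp_mul_deriv_Ioi (f := fun y : ℝ => y ^ 2 / 2)
    (f' := fun y : ℝ => y) (g := g) (a := s)
    (by fun_prop)
    (Tendsto.atTop_div_const two_pos (tendsto_pow_atTop two_ne_zero))
    (fun x hx => ((hasDerivAt_pow 2 x).div_const 2).hasDerivWithinAt.congr_deriv (by
      push_cast; ring))
    (hgcont.mono himg1)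
    (hgint.mono_set himg2)
    hg2
  rw [← key, ← integral_const_mul]
  refine setIntegral_congr_fun measurableSet_Ioi fun y hy => ?_
  have hy0 : 0 < y := lt_of_le_of_lt hs hy
  rw [Function.comp_apply, hpt y hy0, ← mul_assoc, ← Real.rpow_add two_pos]
  norm_num

lemma aux_tail (n : ℕ) (hn : 0 < n) (c : ℝ) (hc : 0 ≤ c) :
    (2 * π) ^ (-(n : ℝ) / 2) *
      ∫ g in {g : Fin n → ℝ | c < ∑ i, g i ^ 2}, Real.exp (-(∑ i, g i ^ 2) / 2)
      = chiSqUpperTail n c := by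
  haveI : NeZero n := ⟨hn.ne'⟩
  -- transfer to EuclideanSpace
  set E := EuclideanSpace ℝ (Fin n)
  haveI : Nontrivial E := by
    refine ⟨0, EuclideanSpace.single ⟨0, hn⟩ 1, fun h => ?_⟩
    have h2 := congrFun (congrArg (fun v : E => (v : Fin n → ℝ)) h) ⟨0, hn⟩
    simp only [EuclideanSpace.single_apply, if_pos rfl] at h2
    change (0:ℝ) = 1 at h2
    norm_num at h2
  set B : Set (Fin n → ℝ) := {g | c < ∑ i, g i ^ 2} with hB
  have hBmeas : MeasurableSet B := by
    have : Continuous fun g : Fin n → ℝ => ∑ i, g i ^ 2 := by fun_prop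
    exact measurableSet_lt measurable_const this.measurable
  set F : ℝ → ℝ := fun y => Set.indicator (Ioi (Real.sqrt c))
    (fun y => Real.exp (-(y ^ 2) / 2)) y with hF
  have step1 : ∫ g in B, Real.exp (-(∑ i, g i ^ 2) / 2) = ∫ x : E, F ‖x‖ := by
    rw [← integral_indicator hBmeas]
    rw [← (EuclideanSpace.volume_preserving_symm_measurableEquiv_toLp (Fin n)).integral_comp
      (MeasurableEquiv.measurableEmbedding _)]
    congr 1
    funext x
    have hxx : ((MeasurableEquiv.toLp 2 (Fin n → ℝ)).symm x : Fin n → ℝ) = fun i => x i := rfl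
    have hnorm : ‖x‖ ^ 2 = ∑ i, x i ^ 2 := by
      rw [EuclideanSpace.norm_eq, sq_sqrt (by positivity)]
      simp [sq_abs]
    have hmem : c < ∑ i, x i ^ 2 ↔ Real.sqrt c < ‖x‖ := by
      constructor
      · intro h
        have hx0 : 0 < ‖x‖ := by
          by_contra h0
          push_neg at h0
          have hz : ‖x‖ = 0 := le_antisymm h0 (norm_nonneg _)
          have := hnorm
          rw [hz] at this
          rw [← this] at h
          norm_num at h
          linarith
        rw [Real.sqrt_lt' hx0, hnorm]
        exact h
      · intro h
        have hx0 : 0 < ‖x‖ := lt_of_le_of_lt (Real.sqrt_nonneg c) h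
        rw [Real.sqrt_lt' hx0, hnorm] at h
        exact h
    rw [hF]
    simp only [Set.indicator_apply, hxx, hB, mem_setOf_eq, mem_Ioi]
    by_cases h : Real.sqrt c < ‖x‖
    · rw [if_pos (hmem.mpr h), if_pos h, ← hnorm]
    · rw [if_neg (fun hm => h (hmem.mp hm)), if_neg h]
  have step2 : ∫ x : E, F ‖x‖ = n • (volume (Metric.ball (0:E) 1)).toReal •
      ∫ y in Ioi (0:ℝ), y ^ (n - 1) • F y := by
    have := MeasureTheory.integral_fun_norm_addHaar (volume : Measure E) F
    rwa [finrank_euclideanSpace_fin] at this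
  have step3 : ∫ y in Ioi (0:ℝ), y ^ (n - 1) • F y
      = ∫ y in Ioi (Real.sqrt c), y ^ (n - 1) * Real.exp (-(y ^ 2) / 2) := by
    have : ∀ y : ℝ, y ^ (n - 1) • F y
        = Set.indicator (Ioi (Real.sqrt c)) (fun y => y ^ (n - 1) * Real.exp (-(y ^ 2) / 2)) y := by
      intro y
      rw [hF]
      by_cases h : y ∈ Ioi (Real.sqrt c) <;>
        simp [Set.indicator_of_mem, Set.indicator_of_notMem, h]
    simp_rw [this]
    rw [setIntegral_indicator measurableSet_Ioi, Set.Ioi_inter_Ioi,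
      max_eq_right (Real.sqrt_nonneg c)]
  have step4 := aux_subst n hn (Real.sqrt c) (Real.sqrt_nonneg c)
  rw [Real.sq_sqrt hc] at step4
  have hvol : (volume (Metric.ball (0:E) 1)).toReal
      = Real.sqrt π ^ n / Real.Gamma ((n:ℝ) / 2 + 1) := by
    rw [EuclideanSpace.volume_ball]
    simp only [Fintype.card_fin, ENNReal.ofReal_one, one_pow, one_mul]
    rw [ENNReal.toReal_ofReal (by positivity)]
  have hGamma : ∫ t in Ioi (0:ℝ), t ^ ((n : ℝ) / 2 - 1) * Real.exp (-t)
      = Real.Gamma ((n:ℝ)/2) := by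
    rw [Real.Gamma_eq_integral (by positivity)]
    exact setIntegral_congr_fun measurableSet_Ioi fun t ht => by ring
  -- put it together
  rw [step1, step2, step3, step4, hvol]
  rw [chiSqUpperTail, hGamma]
  have hG2 : Real.Gamma ((n:ℝ)/2 + 1) = ((n:ℝ)/2) * Real.Gamma ((n:ℝ)/2) := by
    rw [Real.Gamma_add_one (by positivity)]
  rw [hG2]
  have hGpos : 0 < Real.Gamma ((n:ℝ)/2) := Real.Gamma_pos_of_pos (by positivity)
  have hsqpi : Real.sqrt π ^ n = π ^ ((n:ℝ)/2) := by
    rw [Real.sqrt_eq_rpow, ← Real.rpow_natCast (π ^ (1/2 : ℝ)) n, ← Real.rpow_mul pi_pos.le]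
    congr 1
    ring
  have h2pi : (2 * π) ^ (-(n:ℝ)/2) = 2 ^ (-(n:ℝ)/2) * π ^ (-(n:ℝ)/2) :=
    Real.mul_rpow two_pos.le pi_pos.le
  rw [hsqpi, h2pi]
  simp only [nsmul_eq_mul, smul_eq_mul]
  have h2c : (2:ℝ) ^ (-(n:ℝ)/2) * (2:ℝ) ^ ((n:ℝ)/2 - 1) = 1/2 := by
    rw [← Real.rpow_add two_pos]
    rw [show -(n:ℝ)/2 + ((n:ℝ)/2 - 1) = -1 by ring, Real.rpow_neg_one]
    norm_num
  have hpic : π ^ (-(n:ℝ)/2) * π ^ ((n:ℝ)/2) = 1 := by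
    rw [← Real.rpow_add pi_pos]
    rw [show -(n:ℝ)/2 + (n:ℝ)/2 = 0 by ring, Real.rpow_zero]
  have hne : ((n:ℝ)) ≠ 0 := Nat.cast_ne_zero.mpr hn.ne'
  set I := ∫ t in Ioi (c/2), t ^ ((n:ℝ)/2 - 1) * Real.exp (-t) with hI
  set G := Real.Gamma ((n:ℝ)/2) with hGdef
  have hGne : G ≠ 0 := ne_of_gt hGpos
  have hconst : (2:ℝ) ^ (-(n:ℝ)/2) * π ^ (-(n:ℝ)/2) *
      ((n:ℝ) * (π ^ ((n:ℝ)/2) / (((n:ℝ)/2) * G) * (2:ℝ) ^ ((n:ℝ)/2 - 1))) = G⁻¹ := by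
    have expand : (2:ℝ) ^ (-(n:ℝ)/2) * π ^ (-(n:ℝ)/2) *
        ((n:ℝ) * (π ^ ((n:ℝ)/2) / (((n:ℝ)/2) * G) * (2:ℝ) ^ ((n:ℝ)/2 - 1)))
        = ((2:ℝ) ^ (-(n:ℝ)/2) * (2:ℝ) ^ ((n:ℝ)/2 - 1)) *
          ((π:ℝ) ^ (-(n:ℝ)/2) * π ^ ((n:ℝ)/2)) *
          ((n:ℝ) / (((n:ℝ)/2) * G)) := by ring
    rw [expand, h2c, hpic]
    field_simp
  linear_combination I * hconst

lemma aux_quad_le {n : ℕ} (S : Matrix (Fin n) (Fin n) ℝ) (hPD : S.PosDef) (lam : ℝ)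
    (hEigLe : ∀ (μ : ℝ) (v : Fin n → ℝ), v ≠ 0 → S.mulVec v = μ • v → μ ≤ lam)
    (x : Fin n → ℝ) :
    x ⬝ᵥ S.mulVec x ≤ lam * (x ⬝ᵥ x) := by
  classical
  have hS : S.IsHermitian := hPD.isHermitian
  set U : Matrix (Fin n) (Fin n) ℝ := (hS.eigenvectorUnitary : Matrix (Fin n) (Fin n) ℝ) with hU
  have hUnit : U * star U = 1 := (Matrix.mem_unitaryGroup_iff).mp hS.eigenvectorUnitary.2
  have hstar : star U = Uᵀ := by
    ext i j
    simp [Matrix.star_apply]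
  set w : Fin n → ℝ := star U *ᵥ x with hw
  have heig : ∀ i, hS.eigenvalues i ≤ lam := by
    intro i
    refine hEigLe _ (⇑(hS.eigenvectorBasis i)) ?_ (hS.mulVec_eigenvectorBasis i)
    intro h0
    have h1 : hS.eigenvectorBasis i = 0 := by
      ext j
      exact congrFun h0 j
    have := hS.eigenvectorBasis.orthonormal.1 i
    rw [h1] at this
    simp at this
  have hspec := hS.spectral_theorem
  have hquad : x ⬝ᵥ S.mulVec x = w ⬝ᵥ (Matrix.diagonal hS.eigenvalues).mulVec w := by
    conv_lhs => rw [hspec, Unitary.conjStarAlgAut_apply]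
    rw [← Matrix.mulVec_mulVec, ← Matrix.mulVec_mulVec]
    rw [Matrix.dotProduct_mulVec x U _]
    rw [← Matrix.mulVec_transpose, ← hstar, ← hw]
    congr 1
  have hww : w ⬝ᵥ w = x ⬝ᵥ x := by
    rw [hw, Matrix.dotProduct_mulVec, ← Matrix.mulVec_transpose, hstar,
      Matrix.transpose_transpose, Matrix.mulVec_mulVec, ← hstar, hUnit, Matrix.one_mulVec]
  rw [hquad, ← hww]
  have hexp : w ⬝ᵥ Matrix.diagonal hS.eigenvalues *ᵥ w = ∑ i, hS.eigenvalues i * (w i * w i) := by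
    simp [dotProduct, Matrix.mulVec_diagonal]
    exact Finset.sum_congr rfl fun i _ => by ring
  rw [hexp, dotProduct, Finset.mul_sum]
  refine Finset.sum_le_sum fun i _ => ?_
  have := heig i
  nlinarith [mul_self_nonneg (w i)]

/-- Gaussian measure of the complement of a centered ball is bounded by the
chi-square upper tail `F(n, r²/λ)`, where `λ` is the largest eigenvalue of `Σ`. -/
theorem stmt_10 (n : ℕ) (S : Matrix (Fin n) (Fin n) ℝ) (hSymm : S.IsSymm) (hPD : S.PosDef)
    (lam : ℝ)
    (hEigLe : ∀ (μ : ℝ) (v : Fin n → ℝ), v ≠ 0 → S.mulVec v = μ • v → μ ≤ lam)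
    (hEigEx : ∃ v : Fin n → ℝ, v ≠ 0 ∧ S.mulVec v = lam • v) :
    ∀ r : ℝ, 0 ≤ r →
      (∫ f in {f : Fin n → ℝ | euclNorm f > r},
          (2 * Real.pi) ^ (-(n : ℝ) / 2) * S.det ^ (-(1 : ℝ) / 2) *
            Real.exp (-(f ⬝ᵥ S⁻¹.mulVec f) / 2))
        ≤ chiSqUpperTail n (r ^ 2 / lam) := by
  classical
  intro r hr
  obtain ⟨v, hv, hSv⟩ := hEigEx
  rcases Nat.eq_zero_or_pos n with hn0 | hn
  · exfalso
    apply hv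
    funext i
    exact absurd i.2 (by omega)
  -- lam > 0
  have hdotv : ∀ u : Fin n → ℝ, u ⬝ᵥ u = ∑ i, u i ^ 2 := by
    intro u
    simp only [dotProduct, pow_two]
  have hvv : 0 < v ⬝ᵥ v := by
    rcases (Finset.sum_nonneg fun i _ => mul_self_nonneg (v i)).lt_or_eq with h | h
    · exact h
    · exfalso
      apply hv
      funext i
      have hz := (Finset.sum_eq_zero_iff_of_nonneg
        (fun j _ => mul_self_nonneg (v j))).mp h.symm i (Finset.mem_univ i)
      have : v i = 0 := by nlinarith [hz]
      exact this
  have hlam : 0 < lam := by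
    have h1 := hPD.re_dotProduct_pos hv
    simp only [RCLike.re_to_real, star_trivial] at h1
    rw [hSv] at h1
    have h2 : v ⬝ᵥ (lam • v) = lam * (v ⬝ᵥ v) := by
      simp [dotProduct, Finset.mul_sum]
      exact Finset.sum_congr rfl fun i _ => by ring
    rw [h2] at h1
    nlinarith
  -- square root of S
  open scoped MatrixOrder in
  set T := CFC.sqrt S with hTdef
  open scoped MatrixOrder in
  have hTps : T.PosSemidef := (CFC.sqrt_nonneg S).posSemidef
  open scoped MatrixOrder in
  have hTmul : T * T = S := CFC.sqrt_mul_sqrt_self S hPD.posSemidef.nonneg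
  have hdetS : 0 < S.det := hPD.det_pos
  have hdet2 : T.det * T.det = S.det := by rw [← Matrix.det_mul, hTmul]
  have hdetTnonneg : 0 ≤ T.det := by
    rw [hTps.isHermitian.det_eq_prod_eigenvalues]
    refine Finset.prod_nonneg fun i _ => ?_
    simpa using hTps.eigenvalues_nonneg i
  have hdetT : 0 < T.det := by nlinarith
  have hdetTne : T.det ≠ 0 := hdetT.ne'
  have hTsym : Tᵀ = T := by
    have h := hTps.isHermitian
    ext i j
    rw [Matrix.transpose_apply]
    conv_rhs => rw [← h]
    simp [Matrix.conjTranspose_apply]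
  have hTunit : IsUnit T.det := isUnit_iff_ne_zero.mpr hdetTne
  have hTinv : T⁻¹ * T = 1 := Matrix.nonsing_inv_mul T hTunit
  have hTinv' : T * T⁻¹ = 1 := Matrix.mul_nonsing_inv T hTunit
  have hSinv : S⁻¹ = T⁻¹ * T⁻¹ := by rw [← hTmul, Matrix.mul_inv_rev]
  have quad1 : ∀ g : Fin n → ℝ, (T *ᵥ g) ⬝ᵥ S⁻¹ *ᵥ (T *ᵥ g) = g ⬝ᵥ g := by
    intro g
    rw [Matrix.mulVec_mulVec]
    have h1 : S⁻¹ * T = T⁻¹ := by rw [hSinv, Matrix.mul_assoc, hTinv, Matrix.mul_one]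
    rw [h1, dotProduct_comm, Matrix.dotProduct_mulVec, ← Matrix.mulVec_transpose,
      hTsym, Matrix.mulVec_mulVec, hTinv', Matrix.one_mulVec]
  have quad2 : ∀ g : Fin n → ℝ, (T *ᵥ g) ⬝ᵥ (T *ᵥ g) = g ⬝ᵥ S *ᵥ g := by
    intro g
    rw [Matrix.dotProduct_mulVec, ← Matrix.mulVec_transpose, hTsym, Matrix.mulVec_mulVec,
      hTmul, dotProduct_comm]
  have hnormsq : ∀ u : Fin n → ℝ, euclNorm u ^ 2 = u ⬝ᵥ u := by
    intro u
    rw [euclNorm, Real.sq_sqrt (by positivity), hdotv]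
  -- constants
  have hc0 : S.det ^ (-(1:ℝ)/2) = (T.det)⁻¹ := by
    have e1 : T.det * T.det = T.det ^ (2:ℝ) := by rw [Real.rpow_two, pow_two]
    rw [← hdet2, e1, ← Real.rpow_mul hdetT.le,
      show (2:ℝ) * (-(1:ℝ)/2) = -1 by norm_num, Real.rpow_neg_one]
  -- the density, measurable sets
  set h : (Fin n → ℝ) → ℝ := fun f =>
    (2 * Real.pi) ^ (-(n : ℝ) / 2) * S.det ^ (-(1 : ℝ) / 2) *
      Real.exp (-(f ⬝ᵥ S⁻¹.mulVec f) / 2) with hh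
  have hcontq : Continuous fun f : Fin n → ℝ => f ⬝ᵥ S⁻¹.mulVec f := by
    simp only [dotProduct, Matrix.mulVec]
    fun_prop
  have hcontE : Continuous (euclNorm (n := n)) := by
    apply Real.continuous_sqrt.comp
    fun_prop
  have hmeash : Measurable h := by
    apply Measurable.const_mul
    exact (Real.continuous_exp.comp (by fun_prop : Continuous fun f : Fin n → ℝ =>
      -(f ⬝ᵥ S⁻¹.mulVec f) / 2)).measurable
  set A : Set (Fin n → ℝ) := {f | euclNorm f > r} with hA
  have hAmeas : MeasurableSet A := measurableSet_lt measurable_const hcontE.measurable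
  set B : Set (Fin n → ℝ) := {g | r ^ 2 / lam < ∑ i, g i ^ 2} with hB
  have hBmeas : MeasurableSet B := measurableSet_lt measurable_const
    (by fun_prop : Continuous fun g : Fin n → ℝ => ∑ i, g i ^ 2).measurable
  set A' : Set (Fin n → ℝ) := {g | euclNorm (T *ᵥ g) > r} with hA'
  -- change of variables
  have hmap := Real.map_matrix_volume_pi_eq_smul_volume_pi (M := T) hdetTne
  have hGmeas : Measurable (A.indicator h) := hmeash.indicator hAmeas
  have hTcont : Continuous (Matrix.toLin' T) := LinearMap.continuous_on_pi _
  have hcov : (∫ f, A.indicator h f) = T.det * ∫ g, A.indicator h (T *ᵥ g) := by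
    have h1 : ∫ f, A.indicator h f ∂(Measure.map (Matrix.toLin' T) volume)
        = ∫ g, A.indicator h (Matrix.toLin' T g) :=
      integral_map hTcont.measurable.aemeasurable hGmeas.aestronglyMeasurable
    rw [hmap, integral_smul_measure, ENNReal.toReal_ofReal (abs_nonneg _),
      abs_of_pos (inv_pos.mpr hdetT)] at h1
    have h2 : ∀ g, Matrix.toLin' T g = T *ᵥ g := fun g => Matrix.toLin'_apply T g
    simp only [h2, smul_eq_mul] at h1
    rw [← h1]
    field_simp
  -- pointwise identification of the composed integrand
  have hcomp : ∀ g, A.indicator h (T *ᵥ g)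
      = A'.indicator (fun g' => (2 * Real.pi) ^ (-(n : ℝ) / 2) * (T.det)⁻¹ *
          Real.exp (-(∑ i, g' i ^ 2) / 2)) g := by
    intro g
    rw [Set.indicator_apply, Set.indicator_apply]
    by_cases hgm : g ∈ A'
    · rw [if_pos hgm, if_pos (show T *ᵥ g ∈ A from hgm), hh]
      simp only []
      rw [quad1, hdotv, hc0]
    · rw [if_neg hgm, if_neg (show T *ᵥ g ∉ A from hgm)]
  -- the inequality between indicators
  have hA'B : A' ⊆ B := by
    intro g hg
    rw [hA', mem_setOf_eq] at hg
    have h1 : r ^ 2 < euclNorm (T *ᵥ g) ^ 2 := by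
      have := pow_lt_pow_left₀ hg hr (n := 2) (by norm_num)
      exact this
    rw [hnormsq, quad2] at h1
    have h2 := aux_quad_le S hPD lam hEigLe g
    rw [hdotv] at h2
    rw [hB, mem_setOf_eq, div_lt_iff₀ hlam]
    nlinarith
  have hnn : ∀ g : Fin n → ℝ, 0 ≤ (2 * Real.pi) ^ (-(n : ℝ) / 2) * (T.det)⁻¹ *
      Real.exp (-(∑ i, g i ^ 2) / 2) := by
    intro g
    have : (0:ℝ) ≤ (2 * Real.pi) ^ (-(n : ℝ) / 2) := Real.rpow_nonneg (by positivity) _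
    positivity
  have hintB : Integrable (B.indicator (fun g : Fin n → ℝ =>
      (2 * Real.pi) ^ (-(n : ℝ) / 2) * (T.det)⁻¹ * Real.exp (-(∑ i, g i ^ 2) / 2))) := by
    refine Integrable.indicator ?_ hBmeas
    have := (aux_integrable_gauss n).const_mul ((2 * Real.pi) ^ (-(n : ℝ) / 2) * (T.det)⁻¹)
    exact this
  have hmono : (∫ g, A'.indicator (fun g' => (2 * Real.pi) ^ (-(n : ℝ) / 2) * (T.det)⁻¹ *
        Real.exp (-(∑ i, g' i ^ 2) / 2)) g)
      ≤ ∫ g, B.indicator (fun g' => (2 * Real.pi) ^ (-(n : ℝ) / 2) * (T.det)⁻¹ *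
        Real.exp (-(∑ i, g' i ^ 2) / 2)) g := by
    refine integral_mono_of_nonneg (Filter.Eventually.of_forall fun g =>
      Set.indicator_nonneg (fun g' _ => hnn g') g) hintB
      (Filter.Eventually.of_forall fun g => ?_)
    exact Set.indicator_le_indicator_of_subset hA'B (fun g' => hnn g') g
  -- final computation of the RHS
  have hfinal : T.det * ∫ g, B.indicator (fun g' => (2 * Real.pi) ^ (-(n : ℝ) / 2) * (T.det)⁻¹ *
        Real.exp (-(∑ i, g' i ^ 2) / 2)) g = chiSqUpperTail n (r ^ 2 / lam) := by
    rw [integral_indicator hBmeas, integral_const_mul, ← mul_assoc]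
    rw [show T.det * ((2 * Real.pi) ^ (-(n : ℝ) / 2) * (T.det)⁻¹)
      = (2 * Real.pi) ^ (-(n : ℝ) / 2) by field_simp]
    exact aux_tail n hn (r ^ 2 / lam) (by positivity)
  calc (∫ f in A, h f) = ∫ f, A.indicator h f := (integral_indicator hAmeas).symm
    _ = T.det * ∫ g, A.indicator h (T *ᵥ g) := hcov
    _ = T.det * ∫ g, A'.indicator (fun g' => (2 * Real.pi) ^ (-(n : ℝ) / 2) * (T.det)⁻¹ *
        Real.exp (-(∑ i, g' i ^ 2) / 2)) g := by rw [funext hcomp]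
    _ ≤ T.det * ∫ g, B.indicator (fun g' => (2 * Real.pi) ^ (-(n : ℝ) / 2) * (T.det)⁻¹ *
        Real.exp (-(∑ i, g' i ^ 2) / 2)) g := by
        exact mul_le_mul_of_nonneg_left hmono hdetT.le
    _ = chiSqUpperTail n (r ^ 2 / lam) := hfinal

end
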